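/- If rings A and B are symmetric separably equivalent with context (P, Q, ν, μ), then the context bimodule ${}_AP_B$ is a Frobenius biseparable bimodule: it is left and right finite projective, Hom_B(P_B, B_B) ≅ Hom_A({}_AP, {}_AA) as B-A-bimodules, the evaluation map P ⊗_B Hom_A({}_AP, {}_AA) → A, p ⊗ f ↦ f(p), is a split A-A-bimodule epimorphism, and the evaluation map Hom_B(P_B, B_B) ⊗_A P → B, f ⊗ p ↦ f(p), is a split B-B-bimodule epimorphism. -/

import Mathlib

/-! The dual-basis identities make `q ↦ ν(- ⊗ q)` and `q ↦ μ(q ⊗ -)` bijections of `Q` onto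
`Hom_A(P, A)` and `Hom_B(P, B)`, both compatible with the left `B`- and right `A`-actions, so
composing one with the inverse of the other identifies the two duals as bimodules. Along the
first bijection the evaluation `P ⊗_B Hom_A(P, A) → A` pulls back to `ν`, hence `id ⊗ (ν-dual)`
turns a bimodule section of `ν` into one of the evaluation; symmetrically for `μ`. -/

/-! ### A balanced tensor product of a right module and a left module
over a possibly noncommutative ring, constructed as a quotient of the
`ℤ`-tensor product. -/

open MulOpposite
open scoped TensorProduct

section BalCore

variable (R : Type*) [Ring R] (M : Type*) [AddCommGroup M] [Module Rᵐᵒᵖ M]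
  (N : Type*) [AddCommGroup N] [Module R N]

/-- The subgroup of relations defining the balanced tensor product. -/
def balRel : Submodule ℤ (TensorProduct ℤ M N) :=
  Submodule.span ℤ {x | ∃ (m : M) (r : R) (n : N), x = (op r • m) ⊗ₜ[ℤ] n - m ⊗ₜ[ℤ] (r • n)}

/-- The balanced tensor product `M ⊗[R] N` of a right `R`-module `M` and a
left `R`-module `N`. -/
def Bal : Type _ := TensorProduct ℤ M N ⧸ balRel R M N

noncomputable instance : AddCommGroup (Bal R M N) := Submodule.Quotient.addCommGroup _

variable {M N}

/-- The canonical image of `m ⊗ n` in the balanced tensor product. -/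
noncomputable def Bal.tmul (m : M) (n : N) : Bal R M N := Submodule.Quotient.mk (m ⊗ₜ[ℤ] n)

theorem Bal.add_tmul (m m' : M) (n : N) :
    Bal.tmul R (m + m') n = Bal.tmul R m n + Bal.tmul R m' n := by
  show Submodule.Quotient.mk _ = _
  rw [TensorProduct.add_tmul]
  rfl

theorem Bal.tmul_add (m : M) (n n' : N) :
    Bal.tmul R m (n + n') = Bal.tmul R m n + Bal.tmul R m n' := by
  show Submodule.Quotient.mk _ = _
  rw [TensorProduct.tmul_add]
  rfl

theorem Bal.zero_tmul (n : N) : Bal.tmul R (0 : M) n = 0 := by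
  show Submodule.Quotient.mk _ = _
  rw [TensorProduct.zero_tmul]
  rfl

theorem Bal.tmul_zero (m : M) : Bal.tmul R m (0 : N) = 0 := by
  show Submodule.Quotient.mk _ = _
  rw [TensorProduct.tmul_zero]
  rfl

/-- The fundamental balancing relation `(m · r) ⊗ n = m ⊗ (r · n)`. -/
theorem Bal.op_smul_tmul (m : M) (r : R) (n : N) :
    Bal.tmul R (op r • m) n = Bal.tmul R m (r • n) :=
  (Submodule.Quotient.eq _).2 (Submodule.subset_span ⟨m, r, n, rfl⟩)

theorem Bal.induction_on {C : Bal R M N → Prop} (x : Bal R M N) (zero : C 0)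
    (tmul : ∀ m n, C (Bal.tmul R m n)) (add : ∀ x y, C x → C y → C (x + y)) : C x := by
  obtain ⟨y, rfl⟩ := Submodule.Quotient.mk_surjective _ x
  induction y using TensorProduct.induction_on with
  | zero => exact zero
  | tmul m n => exact tmul m n
  | add a b ha hb =>
      have : (Submodule.Quotient.mk (a + b) : Bal R M N)
          = Submodule.Quotient.mk a + Submodule.Quotient.mk b := rfl
      rw [this]; exact add _ _ ha hb

/-- Lift a balanced biadditive map to the balanced tensor product. -/
noncomputable def Bal.liftFun {T : Type*} [AddCommGroup T] (f : M → N → T)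
    (h1 : ∀ m m' n, f (m + m') n = f m n + f m' n)
    (h2 : ∀ m n n', f m (n + n') = f m n + f m n')
    (h3 : ∀ (m : M) (r : R) (n : N), f (op r • m) n = f m (r • n)) : Bal R M N →+ T :=
  letI f₂ : M →+ N →+ T :=
    AddMonoidHom.mk' (fun m => AddMonoidHom.mk' (f m) (h2 m))
      (fun m m' => AddMonoidHom.ext fun n => h1 m m' n)
  letI bil : M →ₗ[ℤ] N →ₗ[ℤ] T :=
    { toFun := fun m => (f₂ m).toIntLinearMap
      map_add' := fun m m' => LinearMap.ext fun n => by simp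
      map_smul' := fun z m => LinearMap.ext fun n => by
        simp [map_zsmul] }
  ((balRel R M N).liftQ (TensorProduct.lift bil) (by
    rw [balRel, Submodule.span_le]
    rintro x ⟨m, r, n, rfl⟩
    simp only [SetLike.mem_coe, LinearMap.mem_ker, map_sub]
    show TensorProduct.lift bil _ = 0
    rw [map_sub, TensorProduct.lift.tmul, TensorProduct.lift.tmul]
    exact sub_eq_zero.mpr (h3 m r n))).toAddMonoidHom

@[simp] theorem Bal.liftFun_tmul {T : Type*} [AddCommGroup T] (f : M → N → T)
    (h1 : ∀ m m' n, f (m + m') n = f m n + f m' n)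
    (h2 : ∀ m n n', f m (n + n') = f m n + f m n')
    (h3 : ∀ (m : M) (r : R) (n : N), f (op r • m) n = f m (r • n)) (m : M) (n : N) :
    Bal.liftFun R f h1 h2 h3 (Bal.tmul R m n) = f m n := by
  simp [Bal.liftFun, Bal.tmul, Submodule.Quotient.mk]
  rfl

theorem Bal.addHom_ext {T : Type*} [AddCommGroup T] {f g : Bal R M N →+ T}
    (h : ∀ m n, f (Bal.tmul R m n) = g (Bal.tmul R m n)) : f = g := by
  ext x
  refine Bal.induction_on R (C := fun z => f z = g z) x (by simp) h
    (fun x y hx hy => by simp only [map_add]; rw [hx, hy])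

end BalCore
section BalModule

variable (R : Type*) [Ring R] {M : Type*} [AddCommGroup M] [Module Rᵐᵒᵖ M]
  {N : Type*} [AddCommGroup N] [Module R N]

section Left

variable {S : Type*} [Ring S] [Module S M] [SMulCommClass S Rᵐᵒᵖ M]

/-- The left action on the balanced tensor product through the first factor. -/
noncomputable def Bal.lsmulHom (s : S) : Bal R M N →+ Bal R M N :=
  Bal.liftFun R (fun m n => Bal.tmul R (s • m) n)
    (fun m m' n => by
      show Bal.tmul R (s • (m + m')) n = Bal.tmul R (s • m) n + Bal.tmul R (s • m') n
      rw [smul_add, Bal.add_tmul])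
    (fun m n n' => Bal.tmul_add R _ n n')
    (fun m r n => by
      show Bal.tmul R (s • op r • m) n = Bal.tmul R (s • m) (r • n)
      rw [smul_comm, Bal.op_smul_tmul])

theorem Bal.lsmulHom_tmul (s : S) (m : M) (n : N) :
    Bal.lsmulHom R (M := M) (N := N) s (Bal.tmul R m n) = Bal.tmul R (s • m) n :=
  Bal.liftFun_tmul R _ _ _ _ m n

noncomputable instance : SMul S (Bal R M N) := ⟨fun s x => Bal.lsmulHom R s x⟩

theorem Bal.lsmul_tmul (s : S) (m : M) (n : N) :
    s • Bal.tmul R m n = Bal.tmul R (s • m) n :=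
  Bal.lsmulHom_tmul R s m n

theorem Bal.lsmul_one : Bal.lsmulHom R (M := M) (N := N) (1 : S) = AddMonoidHom.id _ :=
  Bal.addHom_ext R fun m n => by
    rw [Bal.lsmulHom_tmul, one_smul, AddMonoidHom.id_apply]

theorem Bal.lsmul_mul (s t : S) :
    Bal.lsmulHom R (M := M) (N := N) (s * t) = (Bal.lsmulHom R s).comp (Bal.lsmulHom R t) :=
  Bal.addHom_ext R fun m n => by
    rw [AddMonoidHom.comp_apply, Bal.lsmulHom_tmul, Bal.lsmulHom_tmul, Bal.lsmulHom_tmul,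
      mul_smul]

theorem Bal.lsmul_addsmul (s t : S) :
    Bal.lsmulHom R (M := M) (N := N) (s + t) = Bal.lsmulHom R s + Bal.lsmulHom R t :=
  Bal.addHom_ext R fun m n => by
    rw [AddMonoidHom.add_apply, Bal.lsmulHom_tmul, Bal.lsmulHom_tmul, Bal.lsmulHom_tmul,
      add_smul, Bal.add_tmul]

theorem Bal.lsmul_zerosmul : Bal.lsmulHom R (M := M) (N := N) (0 : S) = 0 :=
  Bal.addHom_ext R fun m n => by
    rw [Bal.lsmulHom_tmul, zero_smul, Bal.zero_tmul, AddMonoidHom.zero_apply]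

noncomputable instance : Module S (Bal R M N) where
  one_smul x := DFunLike.congr_fun (Bal.lsmul_one R (M := M) (N := N) (S := S)) x
  mul_smul s t x := DFunLike.congr_fun (Bal.lsmul_mul R s t) x
  smul_zero s := (Bal.lsmulHom R (M := M) (N := N) s).map_zero
  smul_add s x y := (Bal.lsmulHom R s).map_add x y
  add_smul s t x := DFunLike.congr_fun (Bal.lsmul_addsmul R s t) x
  zero_smul x := DFunLike.congr_fun (Bal.lsmul_zerosmul R (M := M) (N := N) (S := S)) x

end Left

section Right

variable {S : Type*} [Ring S] [Module Sᵐᵒᵖ N] [SMulCommClass R Sᵐᵒᵖ N]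

/-- The right action on the balanced tensor product through the second factor. -/
noncomputable def Bal.rsmulHom (s : Sᵐᵒᵖ) : Bal R M N →+ Bal R M N :=
  Bal.liftFun R (fun m n => Bal.tmul R m (s • n))
    (fun m m' n => Bal.add_tmul R m m' _)
    (fun m n n' => by
      show Bal.tmul R m (s • (n + n')) = Bal.tmul R m (s • n) + Bal.tmul R m (s • n')
      rw [smul_add, Bal.tmul_add])
    (fun m r n => by
      show Bal.tmul R (op r • m) (s • n) = Bal.tmul R m (s • r • n)
      rw [Bal.op_smul_tmul, smul_comm])

theorem Bal.rsmulHom_tmul (s : Sᵐᵒᵖ) (m : M) (n : N) :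
    Bal.rsmulHom R (M := M) (N := N) s (Bal.tmul R m n) = Bal.tmul R m (s • n) :=
  Bal.liftFun_tmul R _ _ _ _ m n

noncomputable instance : SMul Sᵐᵒᵖ (Bal R M N) := ⟨fun s x => Bal.rsmulHom R s x⟩

theorem Bal.rsmul_tmul (s : Sᵐᵒᵖ) (m : M) (n : N) :
    s • Bal.tmul R m n = Bal.tmul R m (s • n) :=
  Bal.rsmulHom_tmul R s m n

theorem Bal.rsmul_one : Bal.rsmulHom R (M := M) (N := N) (1 : Sᵐᵒᵖ) = AddMonoidHom.id _ :=
  Bal.addHom_ext R fun m n => by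
    rw [Bal.rsmulHom_tmul, one_smul, AddMonoidHom.id_apply]

theorem Bal.rsmul_mul (s t : Sᵐᵒᵖ) :
    Bal.rsmulHom R (M := M) (N := N) (s * t) = (Bal.rsmulHom R s).comp (Bal.rsmulHom R t) :=
  Bal.addHom_ext R fun m n => by
    rw [AddMonoidHom.comp_apply, Bal.rsmulHom_tmul, Bal.rsmulHom_tmul, Bal.rsmulHom_tmul,
      mul_smul]

theorem Bal.rsmul_addsmul (s t : Sᵐᵒᵖ) :
    Bal.rsmulHom R (M := M) (N := N) (s + t) = Bal.rsmulHom R s + Bal.rsmulHom R t :=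
  Bal.addHom_ext R fun m n => by
    rw [AddMonoidHom.add_apply, Bal.rsmulHom_tmul, Bal.rsmulHom_tmul, Bal.rsmulHom_tmul,
      add_smul, Bal.tmul_add]

theorem Bal.rsmul_zerosmul : Bal.rsmulHom R (M := M) (N := N) (0 : Sᵐᵒᵖ) = 0 :=
  Bal.addHom_ext R fun m n => by
    rw [Bal.rsmulHom_tmul, zero_smul, Bal.tmul_zero, AddMonoidHom.zero_apply]

noncomputable instance : Module Sᵐᵒᵖ (Bal R M N) where
  one_smul x := DFunLike.congr_fun (Bal.rsmul_one R (M := M) (N := N) (S := S)) x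
  mul_smul s t x := DFunLike.congr_fun (Bal.rsmul_mul R s t) x
  smul_zero s := (Bal.rsmulHom R (M := M) (N := N) s).map_zero
  smul_add s x y := (Bal.rsmulHom R s).map_add x y
  add_smul s t x := DFunLike.congr_fun (Bal.rsmul_addsmul R s t) x
  zero_smul x := DFunLike.congr_fun (Bal.rsmul_zerosmul R (M := M) (N := N) (S := S)) x

end Right

end BalModule
section HomBimodule

variable {A B P Q : Type*} [Ring A] [Ring B]
  [AddCommGroup P] [Module A P] [Module Bᵐᵒᵖ P] [SMulCommClass A Bᵐᵒᵖ P]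
  [AddCommGroup Q] [Module B Q] [Module Aᵐᵒᵖ Q] [SMulCommClass B Aᵐᵒᵖ Q]

/-- Right multiplication by `b` as a left `A`-module endomorphism of `P`. -/
noncomputable def rmulLinear (b : B) : P →ₗ[A] P where
  toFun p := op b • p
  map_add' := smul_add (op b)
  map_smul' a p := (smul_comm a (op b) p).symm

/-- Left multiplication by `a` as a right `B`-module endomorphism of `P`. -/
noncomputable def lmulLinear (a : A) : P →ₗ[Bᵐᵒᵖ] P where
  toFun p := a • p
  map_add' := smul_add a
  map_smul' b p := smul_comm a b p

/-- The right `A`-action (through the domain) on `Hom_B(P_B, B_B)`: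
`(f · a) p = f (a • p)`. -/
noncomputable instance : Module Aᵐᵒᵖ (P →ₗ[Bᵐᵒᵖ] B) where
  smul a f := f.comp (lmulLinear a.unop)
  one_smul f := LinearMap.ext fun p => by
    show f ((1 : Aᵐᵒᵖ).unop • p) = f p
    rw [unop_one, one_smul]
  mul_smul a a' f := LinearMap.ext fun p => by
    show f ((a * a').unop • p) = f (a'.unop • a.unop • p)
    rw [MulOpposite.unop_mul, mul_smul]
  smul_zero a := LinearMap.ext fun p => rfl
  smul_add a f g := LinearMap.ext fun p => rfl
  add_smul a a' f := LinearMap.ext fun p => by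
    show f ((a + a').unop • p) = f (a.unop • p) + f (a'.unop • p)
    rw [MulOpposite.unop_add, add_smul, map_add]
  zero_smul f := LinearMap.ext fun p => by
    show f ((0 : Aᵐᵒᵖ).unop • p) = 0
    rw [MulOpposite.unop_zero, zero_smul, map_zero]

theorem opSmul_homBB_apply (a : A) (f : P →ₗ[Bᵐᵒᵖ] B) (p : P) :
    (op a • f) p = f (a • p) := rfl

/-- The left `B`-action (through the domain) on `Hom_A({}_A P, {}_A A)`:
`(b · f) p = f (p · b)`. -/
noncomputable instance : Module B (P →ₗ[A] A) where
  smul b f := f.comp (rmulLinear b)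
  one_smul f := LinearMap.ext fun p => by
    show f (op (1 : B) • p) = f p
    rw [op_one, one_smul]
  mul_smul b b' f := LinearMap.ext fun p => by
    show f (op (b * b') • p) = f (op b' • op b • p)
    rw [op_mul, mul_smul]
  smul_zero b := LinearMap.ext fun p => rfl
  smul_add b f g := LinearMap.ext fun p => rfl
  add_smul b b' f := LinearMap.ext fun p => by
    show f (op (b + b') • p) = f (op b • p) + f (op b' • p)
    rw [op_add, add_smul, map_add]
  zero_smul f := LinearMap.ext fun p => by
    show f (op (0 : B) • p) = 0
    rw [op_zero, zero_smul, map_zero]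

theorem smul_homAA_apply (b : B) (f : P →ₗ[A] A) (p : P) :
    (b • f) p = f (op b • p) := rfl

noncomputable instance : SMulCommClass B Aᵐᵒᵖ (P →ₗ[A] A) :=
  ⟨fun _ _ _ => LinearMap.ext fun _ => rfl⟩

noncomputable instance : SMulCommClass B Aᵐᵒᵖ (P →ₗ[Bᵐᵒᵖ] B) :=
  ⟨fun _ _ _ => LinearMap.ext fun _ => rfl⟩

/-- The map `Q → Hom_A({}_A P, {}_A A)`, `q ↦ ν(- ⊗ q)`. -/
noncomputable def nuDual (ν : Bal B P Q →+ A)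
    (hνl : ∀ (a : A) (x : Bal B P Q), ν (a • x) = a * ν x) (q : Q) : P →ₗ[A] A where
  toFun p := ν (Bal.tmul B p q)
  map_add' p p' := by
    show ν (Bal.tmul B (p + p') q) = ν (Bal.tmul B p q) + ν (Bal.tmul B p' q)
    rw [Bal.add_tmul, map_add]
  map_smul' a p := by
    show ν (Bal.tmul B (a • p) q) = a • ν (Bal.tmul B p q)
    rw [← Bal.lsmul_tmul, hνl, smul_eq_mul]

@[simp] theorem nuDual_apply (ν : Bal B P Q →+ A)
    (hνl : ∀ (a : A) (x : Bal B P Q), ν (a • x) = a * ν x) (q : Q) (p : P) :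
    nuDual ν hνl q p = ν (Bal.tmul B p q) := rfl

/-- The map `Q → Hom_B(P_B, B_B)`, `q ↦ μ(q ⊗ -)`. -/
noncomputable def muDual (μ : Bal A Q P →+ B)
    (hμr : ∀ (b : B) (y : Bal A Q P), μ (op b • y) = μ y * b) (q : Q) : P →ₗ[Bᵐᵒᵖ] B where
  toFun p := μ (Bal.tmul A q p)
  map_add' p p' := by
    show μ (Bal.tmul A q (p + p')) = μ (Bal.tmul A q p) + μ (Bal.tmul A q p')
    rw [Bal.tmul_add, map_add]
  map_smul' b p := by
    show μ (Bal.tmul A q (b • p)) = b • μ (Bal.tmul A q p)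
    rw [← Bal.rsmul_tmul, MulOpposite.smul_eq_mul_unop]
    conv_lhs => rw [← MulOpposite.op_unop b]
    rw [hμr]

@[simp] theorem muDual_apply (μ : Bal A Q P →+ B)
    (hμr : ∀ (b : B) (y : Bal A Q P), μ (op b • y) = μ y * b) (q : Q) (p : P) :
    muDual μ hμr q p = μ (Bal.tmul A q p) := rfl

end HomBimodule
section Evaluations

variable {A B P : Type*} [Ring A] [Ring B]
  [AddCommGroup P] [Module A P] [Module Bᵐᵒᵖ P] [SMulCommClass A Bᵐᵒᵖ P]

/-- The evaluation map `P ⊗[B] Hom_A({}_A P, {}_A A) → A`, `p ⊗ f ↦ f p`. -/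
noncomputable def eval₁ (A B P : Type*) [Ring A] [Ring B]
    [AddCommGroup P] [Module A P] [Module Bᵐᵒᵖ P] [SMulCommClass A Bᵐᵒᵖ P] :
    Bal B P (P →ₗ[A] A) →+ A :=
  Bal.liftFun B (fun p f => f p)
    (fun p p' f => map_add f p p')
    (fun p f f' => rfl)
    (fun p b f => rfl)

@[simp] theorem eval₁_tmul (p : P) (f : P →ₗ[A] A) :
    eval₁ A B P (Bal.tmul B p f) = f p :=
  Bal.liftFun_tmul B _ _ _ _ p f

/-- The evaluation map `Hom_B(P_B, B_B) ⊗[A] P → B`, `f ⊗ p ↦ f p`. -/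
noncomputable def eval₂ (A B P : Type*) [Ring A] [Ring B]
    [AddCommGroup P] [Module A P] [Module Bᵐᵒᵖ P] [SMulCommClass A Bᵐᵒᵖ P] :
    Bal A (P →ₗ[Bᵐᵒᵖ] B) P →+ B :=
  Bal.liftFun A (fun f p => f p)
    (fun f f' p => rfl)
    (fun f p p' => map_add f p p')
    (fun f a p => rfl)

@[simp] theorem eval₂_tmul (f : P →ₗ[Bᵐᵒᵖ] B) (p : P) :
    eval₂ A B P (Bal.tmul A f p) = f p :=
  Bal.liftFun_tmul A _ _ _ _ f p

end Evaluations

section Bimodules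

variable {R : Type*} [Ring R] {M : Type*} [AddCommGroup M] [Module Rᵐᵒᵖ M]
  {N : Type*} [AddCommGroup N] [Module R N] {N' : Type*} [AddCommGroup N'] [Module R N']
  {M' : Type*} [AddCommGroup M'] [Module Rᵐᵒᵖ M']

noncomputable def Bal.lTensor (g : N →ₗ[R] N') : Bal R M N →+ Bal R M N' :=
  Bal.liftFun R (fun m n => Bal.tmul R m (g n))
    (fun m m' n => Bal.add_tmul R m m' (g n))
    (fun m n n' => by simp only [map_add, Bal.tmul_add])
    (fun m r n => by simp only [map_smul, Bal.op_smul_tmul])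

@[simp] theorem Bal.lTensor_tmul (g : N →ₗ[R] N') (m : M) (n : N) :
    Bal.lTensor g (Bal.tmul R m n) = Bal.tmul R m (g n) :=
  Bal.liftFun_tmul R _ _ _ _ m n

noncomputable def Bal.rTensor (g : M →ₗ[Rᵐᵒᵖ] M') : Bal R M N →+ Bal R M' N :=
  Bal.liftFun R (fun m n => Bal.tmul R (g m) n)
    (fun m m' n => by simp only [map_add, Bal.add_tmul])
    (fun m n n' => Bal.tmul_add R (g m) n n')
    (fun m r n => by simp only [map_smul, Bal.op_smul_tmul])

@[simp] theorem Bal.rTensor_tmul (g : M →ₗ[Rᵐᵒᵖ] M') (m : M) (n : N) :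
    Bal.rTensor g (Bal.tmul R m n) = Bal.tmul R (g m) n :=
  Bal.liftFun_tmul R _ _ _ _ m n

section Actions

variable {S : Type*} [Ring S]

theorem Bal.lTensor_lsmul [Module S M] [SMulCommClass S Rᵐᵒᵖ M] (g : N →ₗ[R] N') (s : S)
    (x : Bal R M N) :
    Bal.lTensor g (s • x) = s • Bal.lTensor g x := by
  induction x using Bal.induction_on with
  | zero => simp only [smul_zero, map_zero]
  | tmul m n => simp only [Bal.lsmul_tmul, Bal.lTensor_tmul]
  | add x y hx hy => simp only [smul_add, map_add, hx, hy]

theorem Bal.lTensor_rsmul [Module Sᵐᵒᵖ N] [SMulCommClass R Sᵐᵒᵖ N] [Module Sᵐᵒᵖ N']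
    [SMulCommClass R Sᵐᵒᵖ N'] (g : N →ₗ[R] N')
    (hgs : ∀ (s : Sᵐᵒᵖ) (n : N), g (s • n) = s • g n) (s : Sᵐᵒᵖ) (x : Bal R M N) :
    Bal.lTensor g (s • x) = s • Bal.lTensor g x := by
  induction x using Bal.induction_on with
  | zero => simp only [smul_zero, map_zero]
  | tmul m n => simp only [Bal.rsmul_tmul, Bal.lTensor_tmul, hgs]
  | add x y hx hy => simp only [smul_add, map_add, hx, hy]

theorem Bal.rTensor_lsmul [Module S M] [SMulCommClass S Rᵐᵒᵖ M] [Module S M']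
    [SMulCommClass S Rᵐᵒᵖ M'] (g : M →ₗ[Rᵐᵒᵖ] M')
    (hgs : ∀ (s : S) (m : M), g (s • m) = s • g m) (s : S) (x : Bal R M N) :
    Bal.rTensor g (s • x) = s • Bal.rTensor g x := by
  induction x using Bal.induction_on with
  | zero => simp only [smul_zero, map_zero]
  | tmul m n => simp only [Bal.lsmul_tmul, Bal.rTensor_tmul, hgs]
  | add x y hx hy => simp only [smul_add, map_add, hx, hy]

theorem Bal.rTensor_rsmul [Module Sᵐᵒᵖ N] [SMulCommClass R Sᵐᵒᵖ N] (g : M →ₗ[Rᵐᵒᵖ] M')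
    (s : Sᵐᵒᵖ) (x : Bal R M N) :
    Bal.rTensor g (s • x) = s • Bal.rTensor g x := by
  induction x using Bal.induction_on with
  | zero => simp only [smul_zero, map_zero]
  | tmul m n => simp only [Bal.rsmul_tmul, Bal.rTensor_tmul]
  | add x y hx hy => simp only [smul_add, map_add, hx, hy]

end Actions

end Bimodules

theorem Equiv.symm_map_smul {S X Y : Type*} [SMul S X] [SMul S Y] (e : X ≃ Y)
    (h : ∀ (c : S) (x : X), e (c • x) = c • e x) (c : S) (y : Y) :
    e.symm (c • y) = c • e.symm y :=
  e.injective (by rw [h, e.apply_symm_apply, e.apply_symm_apply])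

section Splitting

variable {R X Y : Type*} [Ring R] [AddCommGroup X] [SMul R X] [SMul Rᵐᵒᵖ X]
  [AddCommGroup Y] [SMul R Y] [SMul Rᵐᵒᵖ Y]

def HasBimoduleSection (ε : X →+ R) : Prop :=
  ∃ s : R →+ X, (∀ a c : R, s (a * c) = a • s c) ∧ (∀ a c : R, s (c * a) = op a • s c) ∧
    ∀ a : R, ε (s a) = a

theorem HasBimoduleSection.surjective {ε : X →+ R} (h : HasBimoduleSection ε) :
    Function.Surjective ε := by
  obtain ⟨s, -, -, hs⟩ := h
  exact fun a => ⟨s a, hs a⟩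

theorem HasBimoduleSection.of_comp {ε : X →+ R} (h : HasBimoduleSection ε) (ε' : Y →+ R)
    (ξ : X →+ Y) (hξl : ∀ (a : R) (x : X), ξ (a • x) = a • ξ x)
    (hξr : ∀ (a : R) (x : X), ξ (op a • x) = op a • ξ x) (hξ : ∀ x, ε' (ξ x) = ε x) :
    HasBimoduleSection ε' := by
  obtain ⟨s, hsl, hsr, hs⟩ := h
  refine ⟨ξ.comp s, fun a c => ?_, fun a c => ?_, fun a => ?_⟩
  · rw [AddMonoidHom.comp_apply, hsl, hξl, AddMonoidHom.comp_apply]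
  · rw [AddMonoidHom.comp_apply, hsr, hξr, AddMonoidHom.comp_apply]
  · rw [AddMonoidHom.comp_apply, hξ, hs]

end Splitting

section Context

variable {A B P Q : Type*} [Ring A] [Ring B]
  [AddCommGroup P] [Module A P] [Module Bᵐᵒᵖ P] [SMulCommClass A Bᵐᵒᵖ P]
  [AddCommGroup Q]

theorem eval₁_lsmul (a : A) (x : Bal B P (P →ₗ[A] A)) :
    eval₁ A B P (a • x) = a * eval₁ A B P x := by
  induction x using Bal.induction_on with
  | zero => rw [smul_zero, map_zero, mul_zero]
  | tmul p f => rw [Bal.lsmul_tmul, eval₁_tmul, eval₁_tmul, map_smul, smul_eq_mul]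
  | add x y hx hy => rw [smul_add, map_add, map_add, hx, hy, mul_add]

theorem eval₁_rsmul (a : A) (x : Bal B P (P →ₗ[A] A)) :
    eval₁ A B P (op a • x) = eval₁ A B P x * a := by
  induction x using Bal.induction_on with
  | zero => rw [smul_zero, map_zero, zero_mul]
  | tmul p f => rw [Bal.rsmul_tmul, eval₁_tmul, eval₁_tmul, LinearMap.smul_apply, op_smul_eq_mul]
  | add x y hx hy => rw [smul_add, map_add, map_add, hx, hy, add_mul]

theorem eval₂_lsmul (b : B) (y : Bal A (P →ₗ[Bᵐᵒᵖ] B) P) :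
    eval₂ A B P (b • y) = b * eval₂ A B P y := by
  induction y using Bal.induction_on with
  | zero => rw [smul_zero, map_zero, mul_zero]
  | tmul f p => rw [Bal.lsmul_tmul, eval₂_tmul, eval₂_tmul, LinearMap.smul_apply, smul_eq_mul]
  | add x y hx hy => rw [smul_add, map_add, map_add, hx, hy, mul_add]

theorem eval₂_rsmul (b : B) (y : Bal A (P →ₗ[Bᵐᵒᵖ] B) P) :
    eval₂ A B P (op b • y) = eval₂ A B P y * b := by
  induction y using Bal.induction_on with
  | zero => rw [smul_zero, map_zero, zero_mul]
  | tmul f p => rw [Bal.rsmul_tmul, eval₂_tmul, eval₂_tmul, map_smul, op_smul_eq_mul]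
  | add x y hx hy => rw [smul_add, map_add, map_add, hx, hy, add_mul]

section Nu

variable [Module B Q]

noncomputable def nuDualHom (ν : Bal B P Q →+ A)
    (hνl : ∀ (a : A) (x : Bal B P Q), ν (a • x) = a * ν x) : Q →ₗ[B] (P →ₗ[A] A) where
  toFun := nuDual ν hνl
  map_add' q q' := LinearMap.ext fun p => by
    show ν _ = ν _ + ν _
    rw [Bal.tmul_add, map_add]
  map_smul' b q := LinearMap.ext fun p => congrArg ν (Bal.op_smul_tmul B p b q).symm

@[simp] theorem nuDualHom_apply (ν : Bal B P Q →+ A)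
    (hνl : ∀ (a : A) (x : Bal B P Q), ν (a • x) = a * ν x) (q : Q) :
    nuDualHom ν hνl q = nuDual ν hνl q := rfl

theorem eval₁_lTensor_nuDual (ν : Bal B P Q →+ A)
    (hνl : ∀ (a : A) (x : Bal B P Q), ν (a • x) = a * ν x) (x : Bal B P Q) :
    eval₁ A B P (Bal.lTensor (nuDualHom ν hνl) x) = ν x := by
  induction x using Bal.induction_on with
  | zero => rw [map_zero, map_zero, map_zero]
  | tmul p q => rw [Bal.lTensor_tmul, eval₁_tmul]; rfl
  | add x y hx hy => rw [map_add, map_add, map_add, hx, hy]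

variable [Module Aᵐᵒᵖ Q]

theorem nuDual_injective (ν : Bal B P Q →+ A)
    (hνl : ∀ (a : A) (x : Bal B P Q), ν (a • x) = a * ν x) {n : ℕ} (q' : Fin n → Q)
    (p' : Fin n → P) (adj2 : ∀ q : Q, ∑ i, op (ν (Bal.tmul B (p' i) q)) • q' i = q) :
    Function.Injective (nuDual ν hνl) := by
  intro q₁ q₂ h
  have hp : ∀ i, ν (Bal.tmul B (p' i) q₁) = ν (Bal.tmul B (p' i) q₂) :=
    fun i => LinearMap.congr_fun h (p' i)
  rw [← adj2 q₁, ← adj2 q₂]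
  simp only [hp]

variable [SMulCommClass B Aᵐᵒᵖ Q]

theorem nuDual_rsmul (ν : Bal B P Q →+ A)
    (hνl : ∀ (a : A) (x : Bal B P Q), ν (a • x) = a * ν x)
    (hνr : ∀ (a : A) (x : Bal B P Q), ν (op a • x) = ν x * a) (a : Aᵐᵒᵖ) (q : Q) :
    nuDual ν hνl (a • q) = a • nuDual ν hνl q :=
  LinearMap.ext fun p => by
    rw [LinearMap.smul_apply, nuDual_apply, nuDual_apply, ← Bal.rsmul_tmul, ← op_unop a, hνr,
      op_smul_eq_mul]

theorem nuDual_surjective (ν : Bal B P Q →+ A)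
    (hνl : ∀ (a : A) (x : Bal B P Q), ν (a • x) = a * ν x)
    (hνr : ∀ (a : A) (x : Bal B P Q), ν (op a • x) = ν x * a) {n : ℕ} (q' : Fin n → Q)
    (p' : Fin n → P) (adj1 : ∀ p : P, ∑ i, ν (Bal.tmul B p (q' i)) • p' i = p) :
    Function.Surjective (nuDual ν hνl) := by
  intro g
  refine ⟨∑ i, op (g (p' i)) • q' i, LinearMap.ext fun p => ?_⟩
  calc nuDual ν hνl (∑ i, op (g (p' i)) • q' i) p
      = ∑ i, ν (Bal.tmul B p (q' i)) * g (p' i) := by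
        simp only [← nuDualHom_apply ν hνl, map_sum, LinearMap.sum_apply]
        simp only [nuDualHom_apply, nuDual_rsmul ν hνl hνr, LinearMap.smul_apply, nuDual_apply,
          op_smul_eq_mul]
    _ = g p := by simp only [← smul_eq_mul, ← map_smul, ← map_sum, adj1]

theorem hasBimoduleSection_eval₁ (ν : Bal B P Q →+ A)
    (hνl : ∀ (a : A) (x : Bal B P Q), ν (a • x) = a * ν x)
    (hνr : ∀ (a : A) (x : Bal B P Q), ν (op a • x) = ν x * a) (hν : HasBimoduleSection ν) :
    HasBimoduleSection (eval₁ A B P) :=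
  hν.of_comp _ _ (Bal.lTensor_lsmul _)
    (fun a => Bal.lTensor_rsmul _ (nuDual_rsmul ν hνl hνr) (op a)) (eval₁_lTensor_nuDual ν hνl)

end Nu

section Mu

variable [Module Aᵐᵒᵖ Q]

noncomputable def muDualHom (μ : Bal A Q P →+ B)
    (hμr : ∀ (b : B) (y : Bal A Q P), μ (op b • y) = μ y * b) :
    Q →ₗ[Aᵐᵒᵖ] (P →ₗ[Bᵐᵒᵖ] B) where
  toFun := muDual μ hμr
  map_add' q q' := LinearMap.ext fun p => by
    show μ _ = μ _ + μ _
    rw [Bal.add_tmul, map_add]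
  map_smul' a q := LinearMap.ext fun p => congrArg μ (Bal.op_smul_tmul A q a.unop p)

@[simp] theorem muDualHom_apply (μ : Bal A Q P →+ B)
    (hμr : ∀ (b : B) (y : Bal A Q P), μ (op b • y) = μ y * b) (q : Q) :
    muDualHom μ hμr q = muDual μ hμr q := rfl

theorem eval₂_rTensor_muDual (μ : Bal A Q P →+ B)
    (hμr : ∀ (b : B) (y : Bal A Q P), μ (op b • y) = μ y * b) (y : Bal A Q P) :
    eval₂ A B P (Bal.rTensor (muDualHom μ hμr) y) = μ y := by
  induction y using Bal.induction_on with
  | zero => rw [map_zero, map_zero, map_zero]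
  | tmul q p => rw [Bal.rTensor_tmul, eval₂_tmul]; rfl
  | add x y hx hy => rw [map_add, map_add, map_add, hx, hy]

variable [Module B Q]

theorem muDual_injective (μ : Bal A Q P →+ B)
    (hμr : ∀ (b : B) (y : Bal A Q P), μ (op b • y) = μ y * b) {k : ℕ} (pj : Fin k → P)
    (qj : Fin k → Q) (adj3 : ∀ q : Q, ∑ j, μ (Bal.tmul A q (pj j)) • qj j = q) :
    Function.Injective (muDual μ hμr) := by
  intro q₁ q₂ h
  have hp : ∀ j, μ (Bal.tmul A q₁ (pj j)) = μ (Bal.tmul A q₂ (pj j)) :=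
    fun j => LinearMap.congr_fun h (pj j)
  rw [← adj3 q₁, ← adj3 q₂]
  simp only [hp]

variable [SMulCommClass B Aᵐᵒᵖ Q]

theorem muDual_lsmul (μ : Bal A Q P →+ B)
    (hμl : ∀ (b : B) (y : Bal A Q P), μ (b • y) = b * μ y)
    (hμr : ∀ (b : B) (y : Bal A Q P), μ (op b • y) = μ y * b) (b : B) (q : Q) :
    muDual μ hμr (b • q) = b • muDual μ hμr q :=
  LinearMap.ext fun p => by
    rw [LinearMap.smul_apply, muDual_apply, muDual_apply, ← Bal.lsmul_tmul, hμl, smul_eq_mul]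

theorem muDual_surjective (μ : Bal A Q P →+ B)
    (hμl : ∀ (b : B) (y : Bal A Q P), μ (b • y) = b * μ y)
    (hμr : ∀ (b : B) (y : Bal A Q P), μ (op b • y) = μ y * b) {k : ℕ} (pj : Fin k → P)
    (qj : Fin k → Q) (adj4 : ∀ p : P, ∑ j, op (μ (Bal.tmul A (qj j) p)) • pj j = p) :
    Function.Surjective (muDual μ hμr) := by
  intro f
  refine ⟨∑ j, f (pj j) • qj j, LinearMap.ext fun p => ?_⟩
  calc muDual μ hμr (∑ j, f (pj j) • qj j) p
      = ∑ j, f (pj j) * μ (Bal.tmul A (qj j) p) := by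
        simp only [← muDualHom_apply μ hμr, map_sum, LinearMap.sum_apply]
        simp only [muDualHom_apply, muDual_lsmul μ hμl hμr, LinearMap.smul_apply, muDual_apply,
          smul_eq_mul]
    _ = f p := by simp only [← op_smul_eq_mul, ← map_smul, ← map_sum, adj4]

theorem hasBimoduleSection_eval₂ (μ : Bal A Q P →+ B)
    (hμl : ∀ (b : B) (y : Bal A Q P), μ (b • y) = b * μ y)
    (hμr : ∀ (b : B) (y : Bal A Q P), μ (op b • y) = μ y * b) (hμ : HasBimoduleSection μ) :
    HasBimoduleSection (eval₂ A B P) :=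
  hμ.of_comp _ _ (Bal.rTensor_lsmul _ (muDual_lsmul μ hμl hμr))
    (fun b => Bal.rTensor_rsmul _ (op b)) (eval₂_rTensor_muDual μ hμr)

end Mu

theorem exists_bijective_homBB_to_homAA [Module B Q] [Module Aᵐᵒᵖ Q] [SMulCommClass B Aᵐᵒᵖ Q]
    (ν : Bal B P Q →+ A) (hνl : ∀ (a : A) (x : Bal B P Q), ν (a • x) = a * ν x)
    (hνr : ∀ (a : A) (x : Bal B P Q), ν (op a • x) = ν x * a)
    (hν : Function.Bijective (nuDual ν hνl)) (μ : Bal A Q P →+ B)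
    (hμl : ∀ (b : B) (y : Bal A Q P), μ (b • y) = b * μ y)
    (hμr : ∀ (b : B) (y : Bal A Q P), μ (op b • y) = μ y * b)
    (hμ : Function.Bijective (muDual μ hμr)) :
    ∃ Θ : (P →ₗ[Bᵐᵒᵖ] B) → (P →ₗ[A] A),
      Function.Bijective Θ ∧
      (∀ f g : P →ₗ[Bᵐᵒᵖ] B, Θ (f + g) = Θ f + Θ g) ∧
      (∀ (b : B) (f : P →ₗ[Bᵐᵒᵖ] B), Θ (b • f) = b • Θ f) ∧
      (∀ (a : Aᵐᵒᵖ) (f : P →ₗ[Bᵐᵒᵖ] B), Θ (a • f) = a • Θ f) := by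
  let e := LinearEquiv.ofBijective (muDualHom μ hμr) hμ
  have he : ∀ (b : B) f, e.symm (b • f) = b • e.symm f :=
    e.toEquiv.symm_map_smul (muDual_lsmul μ hμl hμr)
  refine ⟨nuDual ν hνl ∘ e.symm, hν.comp e.symm.bijective, fun f g => ?_, fun b f => ?_,
    fun a f => ?_⟩
  · simp only [Function.comp_apply, map_add, ← nuDualHom_apply ν hνl]
  · simp only [Function.comp_apply, he, ← nuDualHom_apply ν hνl, map_smul]
  · simp only [Function.comp_apply, map_smul, nuDual_rsmul ν hνl hνr]

end Context

theorem context_bimodule_is_frobenius_biseparable_general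
    {A B P Q : Type*} [Ring A] [Ring B]
    [AddCommGroup P] [Module A P] [Module Bᵐᵒᵖ P] [SMulCommClass A Bᵐᵒᵖ P]
    [AddCommGroup Q] [Module B Q] [Module Aᵐᵒᵖ Q] [SMulCommClass B Aᵐᵒᵖ Q]
    [Module.Finite A P] [Module.Projective A P]
    [Module.Finite Bᵐᵒᵖ P] [Module.Projective Bᵐᵒᵖ P]
    (ν : Bal B P Q →+ A)
    (hνl : ∀ (a : A) (x : Bal B P Q), ν (a • x) = a * ν x)
    (hνr : ∀ (a : A) (x : Bal B P Q), ν (op a • x) = ν x * a)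
    (hνsplit : ∃ σ : A →+ Bal B P Q,
      (∀ (a c : A), σ (a * c) = a • σ c) ∧ (∀ (a c : A), σ (c * a) = op a • σ c) ∧
      ∀ a : A, ν (σ a) = a)
    (μ : Bal A Q P →+ B)
    (hμl : ∀ (b : B) (y : Bal A Q P), μ (b • y) = b * μ y)
    (hμr : ∀ (b : B) (y : Bal A Q P), μ (op b • y) = μ y * b)
    (hμsplit : ∃ τ : B →+ Bal A Q P,
      (∀ (b c : B), τ (b * c) = b • τ c) ∧ (∀ (b c : B), τ (c * b) = op b • τ c) ∧
      ∀ b : B, μ (τ b) = b)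
    (n : ℕ) (q' : Fin n → Q) (p' : Fin n → P)
    (adj1 : ∀ p : P, ∑ i, ν (Bal.tmul B p (q' i)) • p' i = p)
    (adj2 : ∀ q : Q, ∑ i, op (ν (Bal.tmul B (p' i) q)) • q' i = q)
    (k : ℕ) (pj : Fin k → P) (qj : Fin k → Q)
    (adj3 : ∀ q : Q, ∑ j, μ (Bal.tmul A q (pj j)) • qj j = q)
    (adj4 : ∀ p : P, ∑ j, op (μ (Bal.tmul A (qj j) p)) • pj j = p)
    :
    (Module.Finite A P ∧ Module.Projective A P ∧
     Module.Finite Bᵐᵒᵖ P ∧ Module.Projective Bᵐᵒᵖ P) ∧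
    (∃ Θ : (P →ₗ[Bᵐᵒᵖ] B) → (P →ₗ[A] A),
      Function.Bijective Θ ∧
      (∀ f g : P →ₗ[Bᵐᵒᵖ] B, Θ (f + g) = Θ f + Θ g) ∧
      (∀ (b : B) (f : P →ₗ[Bᵐᵒᵖ] B), Θ (b • f) = b • Θ f) ∧
      (∀ (a : Aᵐᵒᵖ) (f : P →ₗ[Bᵐᵒᵖ] B), Θ (a • f) = a • Θ f)) ∧
    ((∀ (a : A) (x : Bal B P (P →ₗ[A] A)), eval₁ A B P (a • x) = a * eval₁ A B P x) ∧
     (∀ (a : A) (x : Bal B P (P →ₗ[A] A)), eval₁ A B P (op a • x) = eval₁ A B P x * a) ∧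
     Function.Surjective (eval₁ A B P) ∧
     ∃ s : A →+ Bal B P (P →ₗ[A] A),
       (∀ (a c : A), s (a * c) = a • s c) ∧ (∀ (a c : A), s (c * a) = op a • s c) ∧
       ∀ a : A, eval₁ A B P (s a) = a) ∧
    ((∀ (b : B) (y : Bal A (P →ₗ[Bᵐᵒᵖ] B) P), eval₂ A B P (b • y) = b * eval₂ A B P y) ∧
     (∀ (b : B) (y : Bal A (P →ₗ[Bᵐᵒᵖ] B) P), eval₂ A B P (op b • y) = eval₂ A B P y * b) ∧
     Function.Surjective (eval₂ A B P) ∧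
     ∃ t : B →+ Bal A (P →ₗ[Bᵐᵒᵖ] B) P,
       (∀ (b c : B), t (b * c) = b • t c) ∧ (∀ (b c : B), t (c * b) = op b • t c) ∧
       ∀ b : B, eval₂ A B P (t b) = b) := by
  have hν : Function.Bijective (nuDual ν hνl) :=
    ⟨nuDual_injective ν hνl q' p' adj2, nuDual_surjective ν hνl hνr q' p' adj1⟩
  have hμ : Function.Bijective (muDual μ hμr) :=
    ⟨muDual_injective μ hμr pj qj adj3, muDual_surjective μ hμl hμr pj qj adj4⟩
  have h₁ : HasBimoduleSection (eval₁ A B P) := hasBimoduleSection_eval₁ ν hνl hνr hνsplit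
  have h₂ : HasBimoduleSection (eval₂ A B P) := hasBimoduleSection_eval₂ μ hμl hμr hμsplit
  exact ⟨⟨‹_›, ‹_›, ‹_›, ‹_›⟩, exists_bijective_homBB_to_homAA ν hνl hνr hν μ hμl hμr hμ,
    ⟨eval₁_lsmul, eval₁_rsmul, h₁.surjective, h₁⟩, ⟨eval₂_lsmul, eval₂_rsmul, h₂.surjective, h₂⟩⟩

/-- For symmetric separably equivalent rings with context `(P,Q,ν,μ)`,
the bimodule `P` is a Frobenius biseparable bimodule: left and right finite projective,
`Hom_B(P_B, B_B) ≅ Hom_A({}_A P, {}_A A)` as `B`-`A`-bimodules, and both evaluation maps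
are split bimodule epimorphisms. -/
theorem context_bimodule_is_frobenius_biseparable
    {A B P Q : Type*} [Ring A] [Ring B]
    [AddCommGroup P] [Module A P] [Module Bᵐᵒᵖ P] [SMulCommClass A Bᵐᵒᵖ P]
    [AddCommGroup Q] [Module B Q] [Module Aᵐᵒᵖ Q] [SMulCommClass B Aᵐᵒᵖ Q]
    [Module.Finite A P] [Module.Projective A P]
    [Module.Finite Bᵐᵒᵖ P] [Module.Projective Bᵐᵒᵖ P]
    [Module.Finite B Q] [Module.Projective B Q]
    [Module.Finite Aᵐᵒᵖ Q] [Module.Projective Aᵐᵒᵖ Q]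
    (ν : Bal B P Q →+ A)
    (hνl : ∀ (a : A) (x : Bal B P Q), ν (a • x) = a * ν x)
    (hνr : ∀ (a : A) (x : Bal B P Q), ν (op a • x) = ν x * a)
    (hνsurj : Function.Surjective ν)
    (hνsplit : ∃ σ : A →+ Bal B P Q,
      (∀ (a c : A), σ (a * c) = a • σ c) ∧ (∀ (a c : A), σ (c * a) = op a • σ c) ∧
      ∀ a : A, ν (σ a) = a)
    (μ : Bal A Q P →+ B)
    (hμl : ∀ (b : B) (y : Bal A Q P), μ (b • y) = b * μ y)
    (hμr : ∀ (b : B) (y : Bal A Q P), μ (op b • y) = μ y * b)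
    (hμsurj : Function.Surjective μ)
    (hμsplit : ∃ τ : B →+ Bal A Q P,
      (∀ (b c : B), τ (b * c) = b • τ c) ∧ (∀ (b c : B), τ (c * b) = op b • τ c) ∧
      ∀ b : B, μ (τ b) = b)
    (n : ℕ) (q' : Fin n → Q) (p' : Fin n → P)
    (adj1 : ∀ p : P, ∑ i, ν (Bal.tmul B p (q' i)) • p' i = p)
    (adj2 : ∀ q : Q, ∑ i, op (ν (Bal.tmul B (p' i) q)) • q' i = q)
    (k : ℕ) (pj : Fin k → P) (qj : Fin k → Q)
    (adj3 : ∀ q : Q, ∑ j, μ (Bal.tmul A q (pj j)) • qj j = q)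
    (adj4 : ∀ p : P, ∑ j, op (μ (Bal.tmul A (qj j) p)) • pj j = p)
    :
    (Module.Finite A P ∧ Module.Projective A P ∧
     Module.Finite Bᵐᵒᵖ P ∧ Module.Projective Bᵐᵒᵖ P) ∧
    (∃ Θ : (P →ₗ[Bᵐᵒᵖ] B) → (P →ₗ[A] A),
      Function.Bijective Θ ∧
      (∀ f g : P →ₗ[Bᵐᵒᵖ] B, Θ (f + g) = Θ f + Θ g) ∧
      (∀ (b : B) (f : P →ₗ[Bᵐᵒᵖ] B), Θ (b • f) = b • Θ f) ∧
      (∀ (a : Aᵐᵒᵖ) (f : P →ₗ[Bᵐᵒᵖ] B), Θ (a • f) = a • Θ f)) ∧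
    ((∀ (a : A) (x : Bal B P (P →ₗ[A] A)), eval₁ A B P (a • x) = a * eval₁ A B P x) ∧
     (∀ (a : A) (x : Bal B P (P →ₗ[A] A)), eval₁ A B P (op a • x) = eval₁ A B P x * a) ∧
     Function.Surjective (eval₁ A B P) ∧
     ∃ s : A →+ Bal B P (P →ₗ[A] A),
       (∀ (a c : A), s (a * c) = a • s c) ∧ (∀ (a c : A), s (c * a) = op a • s c) ∧
       ∀ a : A, eval₁ A B P (s a) = a) ∧
    ((∀ (b : B) (y : Bal A (P →ₗ[Bᵐᵒᵖ] B) P), eval₂ A B P (b • y) = b * eval₂ A B P y) ∧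
     (∀ (b : B) (y : Bal A (P →ₗ[Bᵐᵒᵖ] B) P), eval₂ A B P (op b • y) = eval₂ A B P y * b) ∧
     Function.Surjective (eval₂ A B P) ∧
     ∃ t : B →+ Bal A (P →ₗ[Bᵐᵒᵖ] B) P,
       (∀ (b c : B), t (b * c) = b • t c) ∧ (∀ (b c : B), t (c * b) = op b • t c) ∧
       ∀ b : B, eval₂ A B P (t b) = b) :=
  context_bimodule_is_frobenius_biseparable_general ν hνl hνr hνsplit μ hμl hμr hμsplit n q' p' adj1
    adj2 k pj qj adj3 adj4
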